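/- Let R(q,c) be the ring of cliques with c ≥ 2, q even, q ≥ 2. If q > c²−c+2, then the partition of R(q,c) into q/2 contiguous blocks of two consecutive cliques each has strictly greater modularity than the partition into the q single cliques. In particular, when q > c²−c+2 the natural clique partition is not modularity-maximizing (the resolution limit of modularity). -/
import Mathlib


open Finset
open scoped Classical

noncomputable section

namespace HCSPaper

variable {V : Type*} [Fintype V] [DecidableEq V]

/-- The number of edges of a finite simple graph `G`. -/
def edgeCount (G : SimpleGraph V) : ℕ := G.edgeSet.ncard

/-- The degree `d(v)` of a vertex. -/
def deg (G : SimpleGraph V) (v : V) : ℕ := (G.neighborSet v).ncard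

/-- The modularity `Q(P)` of a partition `P` of the vertex set of `G`:
`Q(P) = (1/(2m)) Σ_{u,v} [A_{u,v} − d(u)d(v)/(2m)] δ_P(u,v)`, the sum over ordered pairs. -/
def Qmod (G : SimpleGraph V) (P : Finpartition (Finset.univ : Finset V)) : ℝ :=
  (1 / (2 * (edgeCount G : ℝ))) *
    ∑ u : V, ∑ v : V,
      ((if G.Adj u v then (1 : ℝ) else 0) -
          (deg G u : ℝ) * (deg G v : ℝ) / (2 * (edgeCount G : ℝ))) *
        (if ∃ t ∈ P.parts, u ∈ t ∧ v ∈ t then (1 : ℝ) else 0)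

/-- The ring of cliques `R(q,c)` on vertex set `Fin q × Fin c`: for each `i`, the set
`{i} × Fin c` is a clique (the `i`-th clique), and the canonical vertices `v_i = (i, 0)`
form a cycle, `v_i` being adjacent to `v_{i+1 mod q}`. -/
def ringOfCliques (q c : ℕ) : SimpleGraph (Fin q × Fin c) :=
  SimpleGraph.fromRel fun x y =>
    x.1 = y.1 ∨
      (x.2.val = 0 ∧ y.2.val = 0 ∧
        (y.1.val = (x.1.val + 1) % q ∨ x.1.val = (y.1.val + 1) % q))

/-- The `i`-th clique of the ring of cliques: the vertices `{i} × Fin c`. -/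
def clique (q c : ℕ) (i : Fin q) : Finset (Fin q × Fin c) :=
  Finset.univ.filter fun x => x.1 = i

/-- The union of `len` cyclically consecutive cliques of `R(q,c)` starting at clique
`a`. -/
def cliqueBlock (q c : ℕ) (a : Fin q) (len : ℕ) : Finset (Fin q × Fin c) :=
  (Finset.range len).biUnion fun j =>
    clique q c ⟨(a.val + j) % q, Nat.mod_lt _ a.pos⟩

/-- The partition of the ring of cliques into `k` contiguous blocks of cliques: starting
at clique `r`, the `i`-th part is the union of the `b i` cyclically consecutive cliques
that follow the first `b 0 + ⋯ + b (i-1)` ones. -/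
def blockParts (q c : ℕ) (hq : 0 < q) {k : ℕ} (r : ℕ) (b : Fin k → ℕ) :
    Finset (Finset (Fin q × Fin c)) :=
  Finset.univ.image fun i : Fin k =>
    cliqueBlock q c
      ⟨(r + ∑ j ∈ Finset.univ.filter fun j : Fin k => j < i, b j) % q, Nat.mod_lt _ hq⟩
      (b i)

/-! ### Auxiliary lemmas -/

variable {q c : ℕ}

lemma adj_iff (x y : Fin q × Fin c) :
    (ringOfCliques q c).Adj x y ↔ x ≠ y ∧
      (x.1 = y.1 ∨ (x.2.val = 0 ∧ y.2.val = 0 ∧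
        (y.1.val = (x.1.val + 1) % q ∨ x.1.val = (y.1.val + 1) % q))) := by
  simp only [ringOfCliques, SimpleGraph.fromRel_adj]
  constructor
  · rintro ⟨hne, h | h⟩
    · exact ⟨hne, by tauto⟩
    · exact ⟨hne, by tauto⟩
  · rintro ⟨hne, h⟩
    exact ⟨hne, Or.inl h⟩

def nxt (hq : 3 ≤ q) (i : Fin q) : Fin q := ⟨(i.val+1) % q, Nat.mod_lt _ (by omega)⟩
def prv (hq : 3 ≤ q) (i : Fin q) : Fin q := ⟨(i.val+q-1) % q, Nat.mod_lt _ (by omega)⟩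

lemma nxt_val (hq : 3 ≤ q) (i : Fin q) :
    (nxt hq i).val = if i.val+1 = q then 0 else i.val+1 := by
  have h := i.isLt
  simp only [nxt]
  split_ifs with h1
  · simp [h1]
  · exact Nat.mod_eq_of_lt (by omega)

lemma prv_val (hq : 3 ≤ q) (i : Fin q) :
    (prv hq i).val = if i.val = 0 then q-1 else i.val-1 := by
  have h := i.isLt
  simp only [prv]
  split_ifs with h1
  · have e : i.val + q - 1 = q - 1 := by omega
    rw [e]; exact Nat.mod_eq_of_lt (by omega)
  · have : i.val + q - 1 = (i.val - 1) + q := by omega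
    rw [this, Nat.add_mod_right]
    exact Nat.mod_eq_of_lt (by omega)

lemma cyc_iff (hq : 3 ≤ q) (i a : Fin q) :
    (a.val = (i.val + 1) % q ∨ i.val = (a.val + 1) % q) ↔ (a = nxt hq i ∨ a = prv hq i) := by
  have hi := i.isLt
  have ha := a.isLt
  have h1 : (i.val + 1) % q = (nxt hq i).val := rfl
  have h2 : (a.val + 1) % q = if a.val + 1 = q then 0 else a.val + 1 := by
    have := nxt_val hq a; simpa [nxt] using this
  rw [h1, Fin.ext_iff, Fin.ext_iff, h2, nxt_val hq i, prv_val hq i]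
  split_ifs <;> omega

lemma nxt_ne (hq : 3 ≤ q) (i : Fin q) : nxt hq i ≠ i := by
  have := i.isLt
  rw [Fin.ne_iff_vne, nxt_val hq i]; split_ifs <;> omega

lemma prv_ne (hq : 3 ≤ q) (i : Fin q) : prv hq i ≠ i := by
  have := i.isLt
  rw [Fin.ne_iff_vne, prv_val hq i]; split_ifs <;> omega

lemma nxt_ne_prv (hq : 3 ≤ q) (i : Fin q) : nxt hq i ≠ prv hq i := by
  have := i.isLt
  rw [Fin.ne_iff_vne, nxt_val hq i, prv_val hq i]; split_ifs <;> omega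

lemma deg_eq (hq : 3 ≤ q) (x : Fin q × Fin c) :
    deg (ringOfCliques q c) x = if x.2.val = 0 then c + 1 else c - 1 := by
  obtain ⟨i, j⟩ := x
  have hc1 : 1 ≤ c := j.pos
  by_cases hj : j.val = 0
  · have hbj : ∀ b : Fin c, b.val = 0 ↔ b = j := by
      intro b; rw [Fin.ext_iff]; omega
    have hset : (ringOfCliques q c).neighborSet (i, j) =
        ↑((({i} : Finset (Fin q)) ×ˢ ({j}ᶜ : Finset (Fin c))) ∪
          (({nxt hq i, prv hq i} : Finset (Fin q)) ×ˢ ({j} : Finset (Fin c)))) := by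
      ext ⟨a, b⟩
      simp only [SimpleGraph.mem_neighborSet, adj_iff, coe_union, Set.mem_union, mem_coe,
        mem_product, mem_singleton, mem_compl, mem_insert, ne_eq, Prod.mk.injEq, not_and,
        hj, true_and, cyc_iff hq i a, hbj b]
      constructor
      · rintro ⟨hne, hia | ⟨hb, hcy⟩⟩
        · exact Or.inl ⟨hia.symm, fun hbj' => hne hia hbj'.symm⟩
        · exact Or.inr ⟨hcy, hb⟩
      · rintro (⟨ha, hb⟩ | ⟨hcy, hb⟩)
        · exact ⟨fun _ hjb => hb hjb.symm, Or.inl ha.symm⟩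
        · refine ⟨fun hia _ => ?_, Or.inr ⟨hb, hcy⟩⟩
          rcases hcy with h | h
          · exact nxt_ne hq i (h ▸ hia.symm)
          · exact prv_ne hq i (h ▸ hia.symm)
    rw [deg, hset, Set.ncard_coe_finset, hj, if_pos rfl]
    rw [card_union_of_disjoint, card_product, card_product, card_singleton, card_singleton,
      card_compl, card_singleton, card_pair (nxt_ne_prv hq i)]
    · simp [Fintype.card_fin]; omega
    · rw [disjoint_left]
      rintro ⟨a, b⟩ hab hab'
      simp only [mem_product, mem_singleton, mem_compl] at hab hab'
      exact hab.2 hab'.2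
  · have hset : (ringOfCliques q c).neighborSet (i, j) =
        ↑((({i} : Finset (Fin q)) ×ˢ ({j}ᶜ : Finset (Fin c)))) := by
      ext ⟨a, b⟩
      simp only [SimpleGraph.mem_neighborSet, adj_iff, mem_coe, mem_product, mem_singleton,
        mem_compl, ne_eq, Prod.mk.injEq, not_and, hj, false_and, or_false]
      constructor
      · rintro ⟨hne, hia⟩
        exact ⟨hia.symm, fun hbj' => hne hia hbj'.symm⟩
      · rintro ⟨ha, hb⟩
        exact ⟨fun _ hjb => hb hjb.symm, ha.symm⟩
    rw [deg, hset, Set.ncard_coe_finset, if_neg hj, card_product, card_singleton,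
      card_compl, card_singleton]
    simp [Fintype.card_fin]

lemma filter_lt_eq_Iio {k : ℕ} (i : Fin k) :
    (Finset.univ.filter fun j : Fin k => j < i) = Iio i := by
  ext j; simp

lemma mem_cliqueBlock (a : Fin q) (len : ℕ) (x : Fin q × Fin c) :
    x ∈ cliqueBlock q c a len ↔ ∃ j < len, x.1.val = (a.val + j) % q := by
  simp [cliqueBlock, clique, Fin.ext_iff]

lemma mem_cliqueBlock_one (a : Fin q) (x : Fin q × Fin c) :
    x ∈ cliqueBlock q c a 1 ↔ x.1.val = a.val := by
  rw [mem_cliqueBlock]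
  constructor
  · rintro ⟨j, hj, hx⟩
    interval_cases j
    rwa [Nat.add_zero, Nat.mod_eq_of_lt a.isLt] at hx
  · intro h
    exact ⟨0, one_pos, by rw [Nat.add_zero, Nat.mod_eq_of_lt a.isLt]; exact h⟩

lemma mem_cliqueBlock_two (a : Fin q) (h2 : a.val + 1 < q) (ha : a.val % 2 = 0)
    (x : Fin q × Fin c) :
    x ∈ cliqueBlock q c a 2 ↔ x.1.val / 2 = a.val / 2 := by
  rw [mem_cliqueBlock]
  have hx := x.1.isLt
  constructor
  · rintro ⟨j, hj, hx'⟩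
    interval_cases j
    · rw [Nat.mod_eq_of_lt (by omega)] at hx'; omega
    · rw [Nat.mod_eq_of_lt (by omega)] at hx'; omega
  · intro h
    by_cases hpar : x.1.val % 2 = 0
    · exact ⟨0, by omega, by rw [Nat.mod_eq_of_lt (by omega)]; omega⟩
    · exact ⟨1, by omega, by rw [Nat.mod_eq_of_lt (by omega)]; omega⟩

lemma delta1 (hq0 : 0 < q) (u v : Fin q × Fin c) :
    (∃ t ∈ blockParts q c hq0 0 (fun _ : Fin q => 1), u ∈ t ∧ v ∈ t) ↔ u.1 = v.1 := by
  have hidx : ∀ i : Fin q,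
      ((0 + ∑ j ∈ Finset.univ.filter fun j : Fin q => j < i, (fun _ : Fin q => 1) j) % q)
        = i.val := by
    intro i
    rw [filter_lt_eq_Iio, sum_const, Fin.card_Iio, smul_eq_mul, mul_one, zero_add]
    exact Nat.mod_eq_of_lt i.isLt
  simp only [blockParts, mem_image, mem_univ, true_and, exists_exists_eq_and]
  constructor
  · rintro ⟨i, hu, hv⟩
    rw [mem_cliqueBlock_one] at hu hv
    have h1 : u.1.val = i.val := by rw [hu]; exact hidx i
    have h2 : v.1.val = i.val := by rw [hv]; exact hidx i
    exact Fin.ext (h1.trans h2.symm)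
  · intro h
    refine ⟨u.1, (mem_cliqueBlock_one _ _).2 ?_, (mem_cliqueBlock_one _ _).2 ?_⟩
    · exact (hidx u.1).symm
    · rw [← h]; exact (hidx u.1).symm

lemma delta2 (hq0 : 0 < q) (hqe : q % 2 = 0) (u v : Fin q × Fin c) :
    (∃ t ∈ blockParts q c hq0 0 (fun _ : Fin (q / 2) => 2), u ∈ t ∧ v ∈ t) ↔
      u.1.val / 2 = v.1.val / 2 := by
  have hidx : ∀ i : Fin (q / 2),
      ((0 + ∑ j ∈ Finset.univ.filter fun j : Fin (q / 2) => j < i, (fun _ : Fin (q / 2) => 2) j) % q)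
        = 2 * i.val := by
    intro i
    have h2 := i.isLt
    rw [filter_lt_eq_Iio, sum_const, Fin.card_Iio, smul_eq_mul, zero_add, mul_comm]
    exact Nat.mod_eq_of_lt (by omega)
  have hmem : ∀ (x : Fin q × Fin c) (i : Fin (q / 2)) (a : Fin q), a.val = 2 * i.val →
      (x ∈ cliqueBlock q c a 2 ↔ x.1.val / 2 = i.val) := by
    intro x i a ha
    have h2 := i.isLt
    rw [mem_cliqueBlock_two a (by omega) (by omega)]
    omega
  simp only [blockParts, mem_image, mem_univ, true_and, exists_exists_eq_and]
  constructor
  · rintro ⟨i, hu, hv⟩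
    rw [hmem u i _ (hidx i)] at hu
    rw [hmem v i _ (hidx i)] at hv
    omega
  · intro h
    have hlt : u.1.val / 2 < q / 2 := by
      have := u.1.isLt; omega
    refine ⟨⟨u.1.val / 2, hlt⟩, (hmem u _ _ (hidx _)).2 rfl, (hmem v _ _ (hidx _)).2 ?_⟩
    show v.1.val / 2 = u.1.val / 2
    omega

/-! ### Degrees and edge count -/

/-- The degree profile as a real-valued function of the second coordinate. -/
def dd (c : ℕ) (j : Fin c) : ℝ := if j.val = 0 then (c : ℝ) + 1 else (c : ℝ) - 1

lemma deg_real (hq : 3 ≤ q) (u : Fin q × Fin c) :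
    (deg (ringOfCliques q c) u : ℝ) = dd c u.2 := by
  have hc1 : 1 ≤ c := u.2.pos
  rw [deg_eq hq, dd]
  split_ifs
  · push_cast; ring
  · rw [Nat.cast_sub hc1, Nat.cast_one]

lemma sum_dd (hc : 1 ≤ c) : ∑ j : Fin c, dd c j = (c : ℝ) ^ 2 - c + 2 := by
  have h0 : (0 : ℕ) < c := hc
  have hpt : ∀ j : Fin c, dd c j = ((c : ℝ) - 1) + (if j = (⟨0, h0⟩ : Fin c) then 2 else 0) := by
    intro j
    rw [dd]
    by_cases hj : j.val = 0
    · rw [if_pos hj, if_pos (Fin.ext hj)]; ring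
    · rw [if_neg hj, if_neg (fun h => hj (by rw [h]))]; ring
  rw [Finset.sum_congr rfl fun j _ => hpt j, Finset.sum_add_distrib, sum_const,
    Finset.sum_ite_eq' univ (⟨0, h0⟩ : Fin c) (fun _ => (2 : ℝ)), if_pos (mem_univ _),
    card_univ, Fintype.card_fin, nsmul_eq_mul]
  ring

omit [DecidableEq V] in
lemma sum_deg (G : SimpleGraph V) : ∑ v, deg G v = 2 * edgeCount G := by
  have hdeg : ∀ v, deg G v = G.degree v := fun v => by
    rw [deg, ← SimpleGraph.card_neighborSet_eq_degree, Set.ncard_eq_toFinset_card',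
      Set.toFinset_card]
  have hedge : edgeCount G = G.edgeFinset.card := by
    rw [edgeCount, Set.ncard_eq_toFinset_card', Set.toFinset_card,
      ← SimpleGraph.edgeFinset_card]
  rw [hedge, ← SimpleGraph.sum_degrees_eq_twice_card_edges]
  exact Finset.sum_congr rfl fun v _ => hdeg v

lemma two_m (hq : 3 ≤ q) (hc : 1 ≤ c) :
    2 * (edgeCount (ringOfCliques q c) : ℝ) = q * ((c : ℝ) ^ 2 - c + 2) := by
  have h := sum_deg (ringOfCliques q c)
  have h2 : ((∑ v, deg (ringOfCliques q c) v : ℕ) : ℝ)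
      = ∑ v, (deg (ringOfCliques q c) v : ℝ) := by push_cast; rfl
  have h3 : (∑ v : Fin q × Fin c, (deg (ringOfCliques q c) v : ℝ))
      = q * ((c : ℝ) ^ 2 - c + 2) := by
    rw [Finset.sum_congr rfl fun v _ => deg_real hq v, Fintype.sum_prod_type]
    rw [Finset.sum_congr rfl fun i _ => sum_dd hc, sum_const, card_univ, Fintype.card_fin,
      nsmul_eq_mul]
  rw [← h3, ← h2, h]
  push_cast
  ring

/-! ### Splitting double sums over the product type -/

lemma sum_split (f : Fin q → Fin q → ℝ) (g : Fin c → Fin c → ℝ) :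
    (∑ u : Fin q × Fin c, ∑ v : Fin q × Fin c, f u.1 v.1 * g u.2 v.2)
      = (∑ i : Fin q, ∑ i' : Fin q, f i i') * (∑ j : Fin c, ∑ j' : Fin c, g j j') := by
  simp only [Fintype.sum_prod_type]
  rw [Finset.sum_mul_sum]
  refine Finset.sum_congr rfl fun i _ => ?_
  refine Finset.sum_congr rfl fun j _ => (Finset.sum_mul_sum _ _ _ _).symm

/-! ### The partner clique and adjacency characterizations -/

/-- The index of the other clique in the same block of two: flips the last binary digit. -/
def pairFin (hqe : q % 2 = 0) (i : Fin q) : Fin q :=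
  ⟨2 * (i.val / 2) + (1 - i.val % 2), by have := i.isLt; omega⟩

lemma pairFin_iff (hqe : q % 2 = 0) (i a : Fin q) :
    a = pairFin hqe i ↔ (a.val / 2 = i.val / 2 ∧ a ≠ i) := by
  rw [Fin.ext_iff, Fin.ne_iff_vne]
  show a.val = 2 * (i.val / 2) + (1 - i.val % 2) ↔ _
  have := i.isLt
  have := a.isLt
  omega

lemma pairFin_ne (hqe : q % 2 = 0) (i : Fin q) : pairFin hqe i ≠ i := by
  rw [Fin.ne_iff_vne]
  show 2 * (i.val / 2) + (1 - i.val % 2) ≠ i.val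
  have := i.isLt
  omega

lemma adj_same (u v : Fin q × Fin c) (h : u.1 = v.1) :
    (ringOfCliques q c).Adj u v ↔ u.2 ≠ v.2 := by
  rw [adj_iff]
  constructor
  · rintro ⟨hne, -⟩
    exact fun h2 => hne (Prod.ext h h2)
  · intro h2
    exact ⟨fun hp => h2 (congrArg Prod.snd hp), Or.inl h⟩

lemma adj_pair (hq : 3 ≤ q) (hqe : q % 2 = 0) (i : Fin q) (j j' : Fin c) :
    (ringOfCliques q c).Adj (i, j) (pairFin hqe i, j') ↔ (j.val = 0 ∧ j'.val = 0) := by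
  have hilt := i.isLt
  have hne : i ≠ pairFin hqe i := (pairFin_ne hqe i).symm
  have hp : (pairFin hqe i).val = 2 * (i.val / 2) + (1 - i.val % 2) := rfl
  have hcyc : ((pairFin hqe i).val = (i.val + 1) % q ∨ i.val = ((pairFin hqe i).val + 1) % q) := by
    by_cases hpar : i.val % 2 = 0
    · left; rw [Nat.mod_eq_of_lt (by omega)]; omega
    · right; rw [Nat.mod_eq_of_lt (by omega)]; omega
  rw [adj_iff]
  constructor
  · rintro ⟨-, h | h⟩
    · exact absurd h hne
    · exact ⟨h.1, h.2.1⟩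
  · rintro ⟨h1, h2⟩
    exact ⟨fun hp' => hne (congrArg Prod.fst hp'), Or.inr ⟨h1, h2, hcyc⟩⟩

lemma delta2_split (hqe : q % 2 = 0) (u v : Fin q × Fin c) :
    (if u.1.val / 2 = v.1.val / 2 then (1 : ℝ) else 0)
      = (if u.1 = v.1 then (1 : ℝ) else 0)
        + (if v.1 = pairFin hqe u.1 then (1 : ℝ) else 0) := by
  by_cases h1 : u.1 = v.1
  · rw [if_pos (by rw [h1]), if_pos h1,
      if_neg (fun h => (pairFin_ne hqe u.1) ((h1.trans h).symm))]
    ring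
  · rw [if_neg h1]
    by_cases h2 : v.1 = pairFin hqe u.1
    · rw [if_pos h2, if_pos (((pairFin_iff hqe u.1 v.1).1 h2).1).symm]
      ring
    · rw [if_neg h2, if_neg (fun h => h2 ((pairFin_iff hqe u.1 v.1).2 ⟨h.symm, fun hh => h1 hh.symm⟩))]
      ring

/-! ### Indicator sums -/

lemma sum_ind_eq (i : Fin q) : ∑ i' : Fin q, (if i = i' then (1:ℝ) else 0) = 1 := by
  rw [Finset.sum_ite_eq univ i (fun _ => (1:ℝ)), if_pos (mem_univ i)]

lemma sum_ind_eq' (b : Fin q) : ∑ i' : Fin q, (if i' = b then (1:ℝ) else 0) = 1 := by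
  rw [Finset.sum_ite_eq' univ b (fun _ => (1:ℝ)), if_pos (mem_univ b)]

lemma sum_ind_zero (hc : 1 ≤ c) :
    ∑ j : Fin c, (if j.val = 0 then (1:ℝ) else 0) = 1 := by
  have h0 : (0:ℕ) < c := hc
  have hpt : ∀ j : Fin c, (if j.val = 0 then (1:ℝ) else 0)
      = (if j = (⟨0, h0⟩ : Fin c) then (1:ℝ) else 0) := by
    intro j
    by_cases hj : j.val = 0
    · rw [if_pos hj, if_pos (Fin.ext hj)]
    · rw [if_neg hj, if_neg (fun h => hj (by rw [h]))]
  rw [Finset.sum_congr rfl fun j _ => hpt j,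
    Finset.sum_ite_eq' univ (⟨0, h0⟩ : Fin c) (fun _ => (1:ℝ)), if_pos (mem_univ _)]

lemma sum_ind_ne (j : Fin c) : ∑ j' : Fin c, (if j = j' then (0:ℝ) else 1) = (c:ℝ) - 1 := by
  have hpt : ∀ j' : Fin c, (if j = j' then (0:ℝ) else 1)
      = 1 - (if j = j' then (1:ℝ) else 0) := by
    intro j'; split_ifs <;> ring
  rw [Finset.sum_congr rfl fun j' _ => hpt j', Finset.sum_sub_distrib, sum_const,
    Finset.sum_ite_eq univ j (fun _ => (1:ℝ)), if_pos (mem_univ j), card_univ,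
    Fintype.card_fin, nsmul_eq_mul, mul_one]

/-! ### The four main sums -/

lemma SA_same (hq : 3 ≤ q) :
    ∑ u : Fin q × Fin c, ∑ v : Fin q × Fin c,
      (if (ringOfCliques q c).Adj u v then (1:ℝ) else 0) * (if u.1 = v.1 then (1:ℝ) else 0)
    = q * ((c:ℝ) * ((c:ℝ) - 1)) := by
  have hpt : ∀ u v : Fin q × Fin c,
      (if (ringOfCliques q c).Adj u v then (1:ℝ) else 0) * (if u.1 = v.1 then (1:ℝ) else 0)
      = (if u.1 = v.1 then (1:ℝ) else 0) * (if u.2 = v.2 then (0:ℝ) else 1) := by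
    intro u v
    by_cases h1 : u.1 = v.1
    · by_cases h2 : u.2 = v.2
      · have huv : u = v := Prod.ext h1 h2
        rw [if_neg (by rw [huv]; exact (ringOfCliques q c).irrefl), if_pos h1, if_pos h2]
        ring
      · rw [if_pos ((adj_same u v h1).2 h2), if_pos h1, if_neg h2]
    · simp [h1]
  have f1 : (∑ i : Fin q, ∑ i' : Fin q, if i = i' then (1:ℝ) else 0) = q := by
    rw [Finset.sum_congr rfl fun i _ => sum_ind_eq i, sum_const, card_univ, Fintype.card_fin,
      nsmul_eq_mul, mul_one]
  have f2 : (∑ j : Fin c, ∑ j' : Fin c, if j = j' then (0:ℝ) else 1) = (c:ℝ) * ((c:ℝ) - 1) := by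
    rw [Finset.sum_congr rfl fun j _ => sum_ind_ne j, sum_const, card_univ, Fintype.card_fin,
      nsmul_eq_mul]
  calc _ = ∑ u : Fin q × Fin c, ∑ v : Fin q × Fin c,
        (if u.1 = v.1 then (1:ℝ) else 0) * (if u.2 = v.2 then (0:ℝ) else 1) :=
      Finset.sum_congr rfl fun u _ => Finset.sum_congr rfl fun v _ => hpt u v
    _ = (∑ i : Fin q, ∑ i' : Fin q, if i = i' then (1:ℝ) else 0) *
        (∑ j : Fin c, ∑ j' : Fin c, if j = j' then (0:ℝ) else 1) :=
      sum_split (fun i i' => if i = i' then (1:ℝ) else 0)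
        (fun j j' => if j = j' then (0:ℝ) else 1)
    _ = _ := by rw [f1, f2]

lemma SD_same (hc : 1 ≤ c) :
    ∑ u : Fin q × Fin c, ∑ v : Fin q × Fin c,
      (dd c u.2 * dd c v.2) * (if u.1 = v.1 then (1:ℝ) else 0)
    = q * ((c:ℝ) ^ 2 - c + 2) ^ 2 := by
  have f1 : (∑ i : Fin q, ∑ i' : Fin q, if i = i' then (1:ℝ) else 0) = q := by
    rw [Finset.sum_congr rfl fun i _ => sum_ind_eq i, sum_const, card_univ, Fintype.card_fin,
      nsmul_eq_mul, mul_one]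
  have f2 : (∑ j : Fin c, ∑ j' : Fin c, dd c j * dd c j') = ((c:ℝ) ^ 2 - c + 2) ^ 2 := by
    rw [← Finset.sum_mul_sum univ univ (dd c) (dd c), sum_dd hc]
    ring
  calc _ = ∑ u : Fin q × Fin c, ∑ v : Fin q × Fin c,
        (if u.1 = v.1 then (1:ℝ) else 0) * (dd c u.2 * dd c v.2) :=
      Finset.sum_congr rfl fun u _ => Finset.sum_congr rfl fun v _ => by ring
    _ = (∑ i : Fin q, ∑ i' : Fin q, if i = i' then (1:ℝ) else 0) *
        (∑ j : Fin c, ∑ j' : Fin c, dd c j * dd c j') :=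
      sum_split (fun i i' => if i = i' then (1:ℝ) else 0) (fun j j' => dd c j * dd c j')
    _ = _ := by rw [f1, f2]

lemma SA_pair (hq : 3 ≤ q) (hqe : q % 2 = 0) (hc : 1 ≤ c) :
    ∑ u : Fin q × Fin c, ∑ v : Fin q × Fin c,
      (if (ringOfCliques q c).Adj u v then (1:ℝ) else 0) *
        (if v.1 = pairFin hqe u.1 then (1:ℝ) else 0)
    = q := by
  have hpt : ∀ u v : Fin q × Fin c,
      (if (ringOfCliques q c).Adj u v then (1:ℝ) else 0) *
        (if v.1 = pairFin hqe u.1 then (1:ℝ) else 0)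
      = (if v.1 = pairFin hqe u.1 then (1:ℝ) else 0) *
        ((if u.2.val = 0 then (1:ℝ) else 0) * (if v.2.val = 0 then (1:ℝ) else 0)) := by
    intro u v
    by_cases h : v.1 = pairFin hqe u.1
    · have hA : (ringOfCliques q c).Adj u v ↔ (u.2.val = 0 ∧ v.2.val = 0) := by
        have h' := adj_pair hq hqe u.1 u.2 v.2
        rw [← h] at h'
        simpa using h'
      by_cases h2 : u.2.val = 0 <;> by_cases h3 : v.2.val = 0 <;>
        simp [hA, h, h2, h3]
    · rw [if_neg h, mul_zero, zero_mul]
  have f1 : (∑ i : Fin q, ∑ i' : Fin q, if i' = pairFin hqe i then (1:ℝ) else 0) = q := by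
    rw [Finset.sum_congr rfl fun i _ => sum_ind_eq' (pairFin hqe i), sum_const, card_univ,
      Fintype.card_fin, nsmul_eq_mul, mul_one]
  have f2 : (∑ j : Fin c, ∑ j' : Fin c,
      (if j.val = 0 then (1:ℝ) else 0) * (if j'.val = 0 then (1:ℝ) else 0)) = 1 := by
    rw [← Finset.sum_mul_sum univ univ (fun j : Fin c => if j.val = 0 then (1:ℝ) else 0)
      (fun j' : Fin c => if j'.val = 0 then (1:ℝ) else 0), sum_ind_zero hc, mul_one]
  calc _ = ∑ u : Fin q × Fin c, ∑ v : Fin q × Fin c,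
        (if v.1 = pairFin hqe u.1 then (1:ℝ) else 0) *
          ((if u.2.val = 0 then (1:ℝ) else 0) * (if v.2.val = 0 then (1:ℝ) else 0)) :=
      Finset.sum_congr rfl fun u _ => Finset.sum_congr rfl fun v _ => hpt u v
    _ = (∑ i : Fin q, ∑ i' : Fin q, if i' = pairFin hqe i then (1:ℝ) else 0) *
        (∑ j : Fin c, ∑ j' : Fin c,
          (if j.val = 0 then (1:ℝ) else 0) * (if j'.val = 0 then (1:ℝ) else 0)) :=
      sum_split (fun i i' => if i' = pairFin hqe i then (1:ℝ) else 0)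
        (fun j j' => (if j.val = 0 then (1:ℝ) else 0) * (if j'.val = 0 then (1:ℝ) else 0))
    _ = _ := by rw [f1, f2, mul_one]

lemma SD_pair (hqe : q % 2 = 0) (hc : 1 ≤ c) :
    ∑ u : Fin q × Fin c, ∑ v : Fin q × Fin c,
      (dd c u.2 * dd c v.2) * (if v.1 = pairFin hqe u.1 then (1:ℝ) else 0)
    = q * ((c:ℝ) ^ 2 - c + 2) ^ 2 := by
  have f1 : (∑ i : Fin q, ∑ i' : Fin q, if i' = pairFin hqe i then (1:ℝ) else 0) = q := by
    rw [Finset.sum_congr rfl fun i _ => sum_ind_eq' (pairFin hqe i), sum_const, card_univ,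
      Fintype.card_fin, nsmul_eq_mul, mul_one]
  have f2 : (∑ j : Fin c, ∑ j' : Fin c, dd c j * dd c j') = ((c:ℝ) ^ 2 - c + 2) ^ 2 := by
    rw [← Finset.sum_mul_sum univ univ (dd c) (dd c), sum_dd hc]
    ring
  calc _ = ∑ u : Fin q × Fin c, ∑ v : Fin q × Fin c,
        (if v.1 = pairFin hqe u.1 then (1:ℝ) else 0) * (dd c u.2 * dd c v.2) :=
      Finset.sum_congr rfl fun u _ => Finset.sum_congr rfl fun v _ => by ring
    _ = (∑ i : Fin q, ∑ i' : Fin q, if i' = pairFin hqe i then (1:ℝ) else 0) *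
        (∑ j : Fin c, ∑ j' : Fin c, dd c j * dd c j') :=
      sum_split (fun i i' => if i' = pairFin hqe i then (1:ℝ) else 0)
        (fun j j' => dd c j * dd c j')
    _ = _ := by rw [f1, f2]

/-! ### Expanding the modularity summand -/

lemma sum_expand (hq : 3 ≤ q) (M : ℝ) (δ : (Fin q × Fin c) → (Fin q × Fin c) → ℝ) :
    ∑ u : Fin q × Fin c, ∑ v : Fin q × Fin c,
      ((if (ringOfCliques q c).Adj u v then (1:ℝ) else 0)
        - (deg (ringOfCliques q c) u : ℝ) * (deg (ringOfCliques q c) v : ℝ) / M) * δ u v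
    = (∑ u : Fin q × Fin c, ∑ v : Fin q × Fin c,
        (if (ringOfCliques q c).Adj u v then (1:ℝ) else 0) * δ u v)
      - (∑ u : Fin q × Fin c, ∑ v : Fin q × Fin c,
        (dd c u.2 * dd c v.2) * δ u v) / M := by
  simp only [sub_mul, deg_real hq, Finset.sum_sub_distrib, div_mul_eq_mul_div, Finset.sum_div]

/-! ### Main theorem -/

/-- Resolution limit of modularity: for the ring of cliques `R(q,c)` with `c ≥ 2`, `q`
even, `q ≥ 2` and `q > c²−c+2`, the partition into `q/2` contiguous blocks of two
consecutive cliques each has strictly greater modularity than the partition into the `q`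
single cliques; in particular the natural clique partition is not
modularity-maximizing. -/
theorem ringOfCliques_resolution_limit (q c : ℕ) (hc : 2 ≤ c) (hq : 2 ≤ q)
    (hqeven : Even q) (hqbig : c ^ 2 - c + 2 < q)
    (P₁ P₂ : Finpartition (Finset.univ : Finset (Fin q × Fin c)))
    (hP₁ : P₁.parts = blockParts q c (by omega) 0 (fun _ : Fin q => 1))
    (hP₂ : P₂.parts = blockParts q c (by omega) 0 (fun _ : Fin (q / 2) => 2)) :
    Qmod (ringOfCliques q c) P₁ < Qmod (ringOfCliques q c) P₂ ∧
      ¬ ∀ P', Qmod (ringOfCliques q c) P' ≤ Qmod (ringOfCliques q c) P₁ := by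
  have hc1 : 1 ≤ c := by omega
  have hcc : 2 * c ≤ c ^ 2 := by
    calc 2 * c ≤ c * c := Nat.mul_le_mul_right c hc
    _ = c ^ 2 := (sq c).symm
  have hq5 : 5 ≤ q := by omega
  have hq3 : 3 ≤ q := by omega
  have hqe : q % 2 = 0 := Nat.even_iff.1 hqeven
  have hcR : (1:ℝ) ≤ (c:ℝ) := by exact_mod_cast hc1
  have hDq : (c:ℝ) ^ 2 - c + 2 < (q:ℝ) := by
    have hle : c ≤ c ^ 2 := by omega
    have hcast : ((c ^ 2 - c + 2 : ℕ) : ℝ) = (c:ℝ) ^ 2 - c + 2 := by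
      rw [Nat.cast_add, Nat.cast_sub hle]
      push_cast
      ring
    rw [← hcast]
    exact_mod_cast hqbig
  have hD2 : (2:ℝ) ≤ (c:ℝ) ^ 2 - c + 2 := by nlinarith
  have hD0 : (0:ℝ) < (c:ℝ) ^ 2 - c + 2 := by linarith
  have hq0R : (0:ℝ) < (q:ℝ) := by
    have : (5:ℝ) ≤ (q:ℝ) := by exact_mod_cast hq5
    linarith
  have hMpos : (0:ℝ) < (q:ℝ) * ((c:ℝ) ^ 2 - c + 2) := mul_pos hq0R hD0
  have hδ1 : ∀ u v : Fin q × Fin c,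
      (if ∃ t ∈ P₁.parts, u ∈ t ∧ v ∈ t then (1:ℝ) else 0)
        = (if u.1 = v.1 then (1:ℝ) else 0) := by
    intro u v
    exact if_congr (by rw [hP₁]; exact delta1 _ u v) rfl rfl
  have hδ2 : ∀ u v : Fin q × Fin c,
      (if ∃ t ∈ P₂.parts, u ∈ t ∧ v ∈ t then (1:ℝ) else 0)
        = (if u.1 = v.1 then (1:ℝ) else 0)
          + (if v.1 = pairFin hqe u.1 then (1:ℝ) else 0) := by
    intro u v
    rw [← delta2_split hqe u v]
    exact if_congr (by rw [hP₂]; exact delta2 _ hqe u v) rfl rfl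
  have hQ1 : Qmod (ringOfCliques q c) P₁
      = (1 / ((q:ℝ) * ((c:ℝ) ^ 2 - c + 2))) *
        ((q:ℝ) * ((c:ℝ) * ((c:ℝ) - 1))
          - ((q:ℝ) * ((c:ℝ) ^ 2 - c + 2) ^ 2) / ((q:ℝ) * ((c:ℝ) ^ 2 - c + 2))) := by
    unfold Qmod
    simp only [hδ1]
    rw [sum_expand hq3 _ (fun u v : Fin q × Fin c => if u.1 = v.1 then (1:ℝ) else 0),
      SA_same hq3, SD_same hc1, two_m hq3 hc1]
  have hQ2 : Qmod (ringOfCliques q c) P₂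
      = (1 / ((q:ℝ) * ((c:ℝ) ^ 2 - c + 2))) *
        (((q:ℝ) * ((c:ℝ) * ((c:ℝ) - 1))
            - ((q:ℝ) * ((c:ℝ) ^ 2 - c + 2) ^ 2) / ((q:ℝ) * ((c:ℝ) ^ 2 - c + 2)))
          + ((q:ℝ)
            - ((q:ℝ) * ((c:ℝ) ^ 2 - c + 2) ^ 2) / ((q:ℝ) * ((c:ℝ) ^ 2 - c + 2)))) := by
    unfold Qmod
    simp only [hδ2, mul_add, Finset.sum_add_distrib]
    rw [sum_expand hq3 _ (fun u v : Fin q × Fin c => if u.1 = v.1 then (1:ℝ) else 0),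
      sum_expand hq3 _ (fun u v : Fin q × Fin c => if v.1 = pairFin hqe u.1 then (1:ℝ) else 0),
      SA_same hq3, SD_same hc1, SA_pair hq3 hqe hc1, SD_pair hqe hc1, two_m hq3 hc1]
    ring
  have e : ((q:ℝ) * ((c:ℝ) ^ 2 - c + 2) ^ 2) / ((q:ℝ) * ((c:ℝ) ^ 2 - c + 2))
      = (c:ℝ) ^ 2 - c + 2 := by
    rw [show (q:ℝ) * ((c:ℝ) ^ 2 - c + 2) ^ 2
        = ((q:ℝ) * ((c:ℝ) ^ 2 - c + 2)) * ((c:ℝ) ^ 2 - c + 2) by ring]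
    exact mul_div_cancel_left₀ _ (ne_of_gt hMpos)
  have hlt : Qmod (ringOfCliques q c) P₁ < Qmod (ringOfCliques q c) P₂ := by
    rw [hQ1, hQ2, e]
    apply mul_lt_mul_of_pos_left _ (one_div_pos.2 hMpos)
    linarith [hDq]
  exact ⟨hlt, fun hall => absurd (hall P₂) (not_le.2 hlt)⟩

end HCSPaper
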